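/- arXiv:2009.13800 — 2 statements merged into one kernel-verified Lean document; each statement's English description precedes it below -/
import Mathlib

section
/- Let Ψ : ℝ²_{≥0} → ℝ be concave and positively homogeneous of degree 1 with δ_θ := Ψ(cos θ, sin θ), δ_θ ≥ 0 for all θ ∈ [0, π/2], δ_θ > 0 for all θ ∈ (0, π/2), and δ_0 = max_{θ ∈ [0, π/2]} δ_θ. If additionally δ_{π/2} ≥ δ_θ·sin θ fails for all small θ ∈ (0, π/2) only when δ_0 ≥ δ_{π/2−β}/sin β for all β ∈ (0,π/2), then δ_{π/2} = 0. -/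
/-!
Write `A = Ψ(1, 0)` and `B = Ψ(0, 1)`. A concave, positively homogeneous function is
superadditive, so `Ψ(cos θ, sin θ) ≥ A cos θ + B sin θ`; since the maximum `A` is attained at
`θ = 0`, this gives `B sin θ ≤ A (1 - cos θ) ≤ A sin² θ`, i.e. `B ≤ A sin θ` for every
`θ ∈ (0, π/2)`. Letting `θ → 0` yields `B ≤ 0`, while `B ≥ 0` by assumption.
-/

open Real Set

/-- The closed first quadrant in ℝ². -/
def firstQuadrant : Set (ℝ × ℝ) := {v | 0 ≤ v.1 ∧ 0 ≤ v.2}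

open Filter Topology

theorem ConcaveOn.add_le_of_homogeneous {E : Type*} [AddCommGroup E] [Module ℝ E] {s : Set E}
    {f : E → ℝ} (hf : ConcaveOn ℝ s f) (hhom : ∀ c : ℝ, 0 ≤ c → ∀ v ∈ s, f (c • v) = c * f v)
    {u v : E} (hu : u ∈ s) (hv : v ∈ s) : f u + f v ≤ f (u + v) := by
  have hmid : (1 / 2 : ℝ) • u + (1 / 2 : ℝ) • v ∈ s :=
    hf.1 hu hv (by norm_num) (by norm_num) (by norm_num)
  have hsum : u + v = (2 : ℝ) • ((1 / 2 : ℝ) • u + (1 / 2 : ℝ) • v) := by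
    rw [smul_add, smul_smul, smul_smul]; norm_num
  have := hf.2 hu hv (by norm_num : (0 : ℝ) ≤ 1 / 2) (by norm_num : (0 : ℝ) ≤ 1 / 2) (by norm_num)
  rw [hsum, hhom 2 zero_le_two _ hmid]
  simp only [smul_eq_mul] at this
  linarith

theorem coord_mul_add_le_of_concaveOn_firstQuadrant {Ψ : ℝ × ℝ → ℝ}
    (hconc : ConcaveOn ℝ firstQuadrant Ψ)
    (hhom : ∀ c : ℝ, 0 ≤ c → ∀ v ∈ firstQuadrant, Ψ (c • v) = c * Ψ v)
    {x y : ℝ} (hx : 0 ≤ x) (hy : 0 ≤ y) : x * Ψ (1, 0) + y * Ψ (0, 1) ≤ Ψ (x, y) := by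
  have h10 : ((1 : ℝ), (0 : ℝ)) ∈ firstQuadrant := ⟨zero_le_one, le_rfl⟩
  have h01 : ((0 : ℝ), (1 : ℝ)) ∈ firstQuadrant := ⟨le_rfl, zero_le_one⟩
  have hxy : (x, y) = x • ((1 : ℝ), (0 : ℝ)) + y • ((0 : ℝ), (1 : ℝ)) := by simp
  rw [hxy, ← hhom x hx _ h10, ← hhom y hy _ h01]
  exact hconc.add_le_of_homogeneous hhom (by simp [firstQuadrant, hx])
    (by simp [firstQuadrant, hy])

theorem le_sin_mul_of_cos_mul_add_sin_mul_le {θ a b : ℝ} (hθ : θ ∈ Ioo 0 (π / 2)) (ha : 0 ≤ a)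
    (h : cos θ * a + sin θ * b ≤ a) : b ≤ sin θ * a := by
  have hc : 0 ≤ cos θ := (cos_pos_of_mem_Ioo ⟨by linarith [hθ.1, pi_pos], hθ.2⟩).le
  have hs : 0 < sin θ := sin_pos_of_pos_of_lt_pi hθ.1 (by linarith [hθ.2, pi_pos])
  -- `1 - cos θ ≤ 1 - cos² θ = sin² θ`
  have hcos : 1 - cos θ ≤ sin θ ^ 2 := by nlinarith [sin_sq_add_cos_sq θ, cos_le_one θ]
  have : sin θ * b ≤ sin θ * (sin θ * a) := by nlinarith
  exact le_of_mul_le_mul_left this hs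

theorem nonpos_of_forall_le_sin_mul {a b : ℝ} (h : ∀ θ ∈ Ioo 0 (π / 2), b ≤ sin θ * a) : b ≤ 0 := by
  have hlim : Tendsto (fun θ => sin θ * a) (𝓝[>] 0) (𝓝 0) := by
    have : Tendsto (fun θ => sin θ * a) (𝓝 0) (𝓝 (sin 0 * a)) :=
      (continuous_sin.mul continuous_const).tendsto 0
    simpa using this.mono_left nhdsWithin_le_nhds
  exact ge_of_tendsto hlim (eventually_of_mem (Ioo_mem_nhdsGT (by positivity)) h)

theorem growthRate_pi_div_two_eq_zero_of_max_at_zero_general (Ψ : ℝ × ℝ → ℝ)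
    (hconc : ConcaveOn ℝ firstQuadrant Ψ)
    (hhom : ∀ c : ℝ, 0 ≤ c → ∀ v ∈ firstQuadrant, Ψ (c • v) = c * Ψ v)
    (hnonneg : ∀ θ ∈ Set.Icc 0 (π / 2), 0 ≤ Ψ (Real.cos θ, Real.sin θ))
    (hmax : ∀ θ ∈ Set.Icc 0 (π / 2),
      Ψ (Real.cos θ, Real.sin θ) ≤ Ψ (Real.cos 0, Real.sin 0)) :
    Ψ (Real.cos (π / 2), Real.sin (π / 2)) = 0 := by
  have hpi : (0 : ℝ) ≤ π / 2 := by positivity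
  have hA : 0 ≤ Ψ (1, 0) := by simpa using hnonneg 0 ⟨le_rfl, hpi⟩
  have hB : 0 ≤ Ψ (0, 1) := by simpa using hnonneg (π / 2) ⟨hpi, le_rfl⟩
  have hsin_bound : ∀ θ ∈ Ioo 0 (π / 2), Ψ (0, 1) ≤ sin θ * Ψ (1, 0) := by
    intro θ hθ
    refine le_sin_mul_of_cos_mul_add_sin_mul_le hθ hA ?_
    calc cos θ * Ψ (1, 0) + sin θ * Ψ (0, 1) ≤ Ψ (cos θ, sin θ) :=
          coord_mul_add_le_of_concaveOn_firstQuadrant hconc hhom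
            (cos_nonneg_of_mem_Icc ⟨by linarith [hθ.1, pi_pos], hθ.2.le⟩)
            (sin_nonneg_of_nonneg_of_le_pi hθ.1.le (by linarith [hθ.2, pi_pos]))
      _ ≤ Ψ (1, 0) := by simpa using hmax θ (Ioo_subset_Icc_self hθ)
  simpa using le_antisymm (nonpos_of_forall_le_sin_mul hsin_bound) hB

/-- If the growth rate of slope θ, arising from a concave positively homogeneous function,
is nonnegative on `[0, π/2]`, positive on `(0, π/2)`, and attains its maximum at the
endpoint `θ = 0`, then the growth rate at the other endpoint `π/2` vanishes. -/
theorem growthRate_pi_div_two_eq_zero_of_max_at_zero (Ψ : ℝ × ℝ → ℝ)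
    (hconc : ConcaveOn ℝ firstQuadrant Ψ)
    (hhom : ∀ c : ℝ, 0 ≤ c → ∀ v ∈ firstQuadrant, Ψ (c • v) = c * Ψ v)
    (hnonneg : ∀ θ ∈ Set.Icc 0 (π / 2), 0 ≤ Ψ (Real.cos θ, Real.sin θ))
    (hpos : ∀ θ ∈ Set.Ioo 0 (π / 2), 0 < Ψ (Real.cos θ, Real.sin θ))
    (hmax : ∀ θ ∈ Set.Icc 0 (π / 2),
      Ψ (Real.cos θ, Real.sin θ) ≤ Ψ (Real.cos 0, Real.sin 0)) :
    Ψ (Real.cos (π / 2), Real.sin (π / 2)) = 0 :=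
  growthRate_pi_div_two_eq_zero_of_max_at_zero_general Ψ hconc hhom hnonneg hmax
end

section
/- Let H₁ = ⟨a₁, a₂⟩ and H₂ = ⟨b₁, b₂⟩ be free groups of rank 2, and let G ≤ H₁ × H₂ be generated by x = (a₁, b₁) and y = (a₂, b₂²). For any nontrivial g ∈ G, writing g as a reduced word in x, y with n total letters from {x, x⁻¹} and m total letters from {y, y⁻¹} (counted with exponents), the word lengths satisfy |g₁| = n + m and |g₂| = n + 2m; hence the ratio |g₂|/|g₁| = (n + 2m)/(n + m) lies in the interval [1, 2]. -/
open Real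

/-- The homomorphism from the free group on two letters sending the first letter to
`x = (a₁, b₁)` and the second to `y = (a₂, b₂²)` in `F₂ × F₂`. -/
noncomputable def phi : FreeGroup (Fin 2) →* FreeGroup (Fin 2) × FreeGroup (Fin 2) :=
  FreeGroup.lift (fun i =>
    if i = 0 then (FreeGroup.of 0, FreeGroup.of 0)
    else (FreeGroup.of 1, FreeGroup.of 1 ^ 2))

/-!
The first coordinate of `phi` is the identity, the second is the endomorphism `a₁ ↦ a₁`,
`a₂ ↦ a₂²`. The latter sends the reduced word of `w` to the word in which every letter `a₂^±1`
is doubled; repeating letters never creates a cancelling pair, so this word is again reduced,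
and its length is `n + 2m`.
-/

open List

theorem List.sum_map_comp_eq_sum_mul_length_filter {ι β : Type*} [Fintype β] [DecidableEq β]
    (g : ι → β) (k : β → ℕ) (L : List ι) :
    (L.map fun i => k (g i)).sum = ∑ b, k b * (L.filter fun i => decide (g i = b)).length := by
  induction L with
  | nil => simp
  | cons i L ih =>
    have hstep : ∀ b, k b * ((i :: L).filter fun i => decide (g i = b)).length =
        k b * (L.filter fun i => decide (g i = b)).length + if g i = b then k b else 0 := by
      intro b
      by_cases h : g i = b <;> simp [h, mul_add]
    simp only [hstep, Finset.sum_add_distrib, Finset.sum_ite_eq, Finset.mem_univ, if_true,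
      map_cons, sum_cons, ih, add_comm]

namespace FreeGroup

variable {α : Type*} {k : α → ℕ}

theorem IsReduced.flatMap_replicate (hk : ∀ a, k a ≠ 0) :
    ∀ {L : List (α × Bool)}, IsReduced L → IsReduced (L.flatMap fun p => replicate (k p.1) p)
  | [], _ => IsReduced.nil
  | [p], _ => by
    simpa [IsReduced] using isChain_replicate_of_rel (k p.1) (fun _ => rfl)
  | p :: q :: L, h => by
    rw [flatMap_cons, IsReduced, isChain_append]
    refine ⟨isChain_replicate_of_rel _ (fun _ => rfl), flatMap_replicate hk h.tail, ?_⟩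
    simpa [getLast?_replicate, flatMap_cons, head?_append, head?_replicate, hk] using
      (isReduced_cons_cons.mp h).1

theorem of_pow_eq_mk_replicate (a : α) (n : ℕ) : of a ^ n = mk (replicate n (a, true)) := by
  rw [of, pow_mk]
  simp

theorem inv_of_pow_eq_mk_replicate (a : α) (n : ℕ) :
    (of a ^ n)⁻¹ = mk (replicate n (a, false)) := by
  simp [of_pow_eq_mk_replicate, inv_mk, invRev]

theorem lift_of_pow_mk (L : List (α × Bool)) :
    lift (fun a => of a ^ k a) (mk L) = mk (L.flatMap fun p => replicate (k p.1) p) := by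
  induction L with
  | nil => rfl
  | cons p L ih =>
    rw [flatMap_cons, ← mul_mk, ← ih, ← singleton_append, ← mul_mk, _root_.map_mul]
    congr 1
    obtain ⟨a, _ | _⟩ := p
    · simpa using inv_of_pow_eq_mk_replicate a (k a)
    · simpa using of_pow_eq_mk_replicate a (k a)

variable [DecidableEq α]

theorem toWord_lift_of_pow (hk : ∀ a, k a ≠ 0) (w : FreeGroup α) :
    (lift (fun a => of a ^ k a) w).toWord = w.toWord.flatMap fun p => replicate (k p.1) p := by
  conv_lhs => rw [← mk_toWord (x := w)]
  rw [lift_of_pow_mk, toWord_mk, (isReduced_toWord.flatMap_replicate hk).reduce_eq]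

theorem norm_lift_of_pow (hk : ∀ a, k a ≠ 0) (w : FreeGroup α) :
    (lift (fun a => of a ^ k a) w).norm = (w.toWord.map fun p => k p.1).sum := by
  simp [norm, toWord_lift_of_pow hk, length_flatMap]

end FreeGroup

open FreeGroup

theorem fst_phi (w : FreeGroup (Fin 2)) : (phi w).1 = w := by
  change (MonoidHom.fst _ _).comp phi w = MonoidHom.id _ w
  congr 1
  ext i
  fin_cases i <;> simp [phi]

theorem snd_phi (w : FreeGroup (Fin 2)) :
    (phi w).2 = lift (fun i => of i ^ if i = 0 then 1 else 2) w := by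
  change (MonoidHom.snd _ _).comp phi w = _
  congr 1
  ext i
  fin_cases i <;> simp [phi]

theorem wordlength_in_twisted_diagonal (w : FreeGroup (Fin 2)) (hw : w ≠ 1)
    (n m : ℕ)
    (hn : n = (w.toWord.filter (fun p => decide (p.1 = 0))).length)
    (hm : m = (w.toWord.filter (fun p => decide (p.1 = 1))).length) :
    (phi w).1.norm = n + m ∧ (phi w).2.norm = n + 2 * m ∧
      ((phi w).2.norm : ℝ) / ((phi w).1.norm : ℝ) ∈ Set.Icc (1 : ℝ) 2 := by
  have h₁ : (phi w).1.norm = n + m := by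
    rw [fst_phi, FreeGroup.norm, hn, hm]
    simpa using w.toWord.sum_map_comp_eq_sum_mul_length_filter Prod.fst fun _ => 1
  have h₂ : (phi w).2.norm = n + 2 * m := by
    rw [snd_phi, norm_lift_of_pow (by simp),
      w.toWord.sum_map_comp_eq_sum_mul_length_filter Prod.fst fun i => if i = 0 then 1 else 2,
      Fin.sum_univ_two, hn, hm]
    simp
  have hpos : (0 : ℝ) < n + m := by
    have : 0 < n + m := h₁ ▸ Nat.pos_of_ne_zero (by rwa [Ne, FreeGroup.norm_eq_zero, fst_phi])
    exact_mod_cast this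
  refine ⟨h₁, h₂, ?_⟩
  rw [h₁, h₂, Set.mem_Icc]
  push_cast
  rw [le_div_iff₀ hpos, div_le_iff₀ hpos]
  constructor <;> linarith
end
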